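/- Let $n \geq 3$, $p > \frac{2n}{n+2}$, and $a = \frac{n-1}{n+1}$. Define the sequence $b_0 = -1$, $b_{m+1} = \min\{\, n - 1 - k(b_m, p),\ a \,\}$, where $k(b,p) = \frac{n-1+a}{2} - 1 + \frac{n-1-b}{2}\big(2 - \frac{2}{p}\big) + \frac{n}{2}\big(\frac{2}{p} - 1\big)$. Then as long as $b_m \leq \frac{2n - (n+2)p}{(n+1)(p-1)} + a$, one has $b_{m+1} - b_m \geq \mu(p)$ where $\mu(p) = \frac{n+3}{2(n+1)} - \frac1p + \frac12 - \frac{2n-(n+2)p}{(n+1)(p-1)p} - \frac{n-1}{(n+1)p} > 0$, and consequently there exists $N \in \mathbb{N}$ such that $b_m = a$ for all $m \geq N$. -/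

import Mathlib

/-!
Write `T = (2n - (n+2)p) / ((n+1)(p-1)) + a` and `c = 1 - 1/p`. A direct computation gives
`n - 1 - k(x) = a + c (x - T)` and `μ = a - T = ((n+2)p - 2n) / ((n+1)(p-1))`, which is positive
exactly because `p > 2n/(n+2) ≥ 1`. So the iteration is `x ↦ min (a + c (x - T)) a` with
`0 < c < 1`: below `T` it moves up by at least `a - T`, above `T` it jumps to `a`, and `a > T`
is a fixed point.
-/

section TruncatedAffine

variable {a c T x : ℝ}

theorem sub_le_min_affine_sub (hc : c ≤ 1) (hx : x ≤ T) : a - T ≤ min (a + c * (x - T)) a - x := by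
  rw [le_sub_iff_add_le]
  exact le_min (by nlinarith) (by linarith)

theorem min_affine_eq_of_lt (hc : 0 ≤ c) (hx : T < x) : min (a + c * (x - T)) a = a :=
  min_eq_right (le_add_of_nonneg_right (mul_nonneg hc (sub_nonneg.mpr hx.le)))

end TruncatedAffine

theorem exists_lt_of_forall_le_imp_le_sub {b : ℕ → ℝ} {T δ : ℝ} (hδ : 0 < δ)
    (h : ∀ m, b m ≤ T → δ ≤ b (m + 1) - b m) : ∃ m, T < b m := by
  by_contra! hle
  have hgrowth : ∀ m : ℕ, b 0 + m * δ ≤ b m := by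
    intro m
    induction m with
    | zero => simp
    | succ j ih =>
      push_cast
      linarith [h j (hle j)]
  obtain ⟨m, hm⟩ := exists_nat_gt ((T - b 0) / δ)
  rw [div_lt_iff₀ hδ] at hm
  linarith [hgrowth m, hle m]

theorem exists_forall_ge_eq_of_min_affine {b : ℕ → ℝ} {a c T : ℝ} (hc₀ : 0 ≤ c) (hc₁ : c ≤ 1)
    (hTa : T < a) (hrec : ∀ m, b (m + 1) = min (a + c * (b m - T)) a) :
    ∃ N, ∀ m, N ≤ m → b m = a := by
  have hjump : ∀ m, T < b m → b (m + 1) = a := fun m hm ↦ by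
    rw [hrec, min_affine_eq_of_lt hc₀ hm]
  obtain ⟨M, hM⟩ := exists_lt_of_forall_le_imp_le_sub (b := b) (sub_pos.mpr hTa) fun m hm ↦ by
    rw [hrec]
    exact sub_le_min_affine_sub hc₁ hm
  refine ⟨M + 1, fun m hm ↦ ?_⟩
  induction m, hm using Nat.le_induction with
  | base => exact hjump M hM
  | succ m _ ih => exact hjump m (ih ▸ hTa)

theorem one_lt_of_two_mul_div_add_two_lt {n p : ℝ} (hn : 2 ≤ n) (hp : 2 * n / (n + 2) < p) :
    1 < p := by
  rw [div_lt_iff₀ (by linarith)] at hp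
  nlinarith

theorem stmt_19_general (n : ℕ) (hn : 3 ≤ n) (p : ℝ) (hp : 2 * (n : ℝ) / ((n : ℝ) + 2) < p)
    (a : ℝ) (ha : a = ((n : ℝ) - 1) / ((n : ℝ) + 1))
    (k : ℝ → ℝ)
    (hk : ∀ b : ℝ, k b = ((n : ℝ) - 1 + a) / 2 - 1
      + (((n : ℝ) - 1 - b) / 2) * (2 - 2 / p) + ((n : ℝ) / 2) * (2 / p - 1))
    (μ : ℝ)
    (hμ : μ = ((n : ℝ) + 3) / (2 * ((n : ℝ) + 1)) - 1 / p + 1 / 2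
      - (2 * (n : ℝ) - ((n : ℝ) + 2) * p) / (((n : ℝ) + 1) * (p - 1) * p)
      - ((n : ℝ) - 1) / (((n : ℝ) + 1) * p))
    (b : ℕ → ℝ)
    (hrec : ∀ m, b (m + 1) = min ((n : ℝ) - 1 - k (b m)) a) :
    0 < μ
    ∧ (∀ m, b m ≤ (2 * (n : ℝ) - ((n : ℝ) + 2) * p) / (((n : ℝ) + 1) * (p - 1)) + a →
        μ ≤ b (m + 1) - b m)
    ∧ ∃ N : ℕ, ∀ m, N ≤ m → b m = a := by
  have hp₁ : 1 < p := one_lt_of_two_mul_div_add_two_lt (by exact_mod_cast (by omega : 2 ≤ n)) hp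
  have hp₀ : p ≠ 0 := by positivity
  have hp₁' : p - 1 ≠ 0 := by linarith
  have hn₁ : (n : ℝ) + 1 ≠ 0 := by positivity
  set T := (2 * (n : ℝ) - ((n : ℝ) + 2) * p) / (((n : ℝ) + 1) * (p - 1)) + a with hT
  have hμT : μ = a - T := by
    rw [hμ, hT]
    field_simp
    ring
  have hμ_pos : 0 < μ := by
    rw [hμT, hT, sub_add_cancel_right, neg_pos]
    refine div_neg_of_neg_of_pos ?_ (by positivity)
    nlinarith [(div_lt_iff₀ (by positivity : (0 : ℝ) < n + 2)).mp hp]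
  have hrec' : ∀ m, b (m + 1) = min (a + (1 - 1 / p) * (b m - T)) a := fun m ↦ by
    rw [hrec, hk, hT, ha]
    congr 1
    field_simp
    ring
  have hc₀ : 0 ≤ 1 - 1 / p := by
    rw [sub_nonneg, div_le_one (by positivity)]
    exact hp₁.le
  have hc₁ : 1 - 1 / p ≤ 1 := by
    have : 0 < 1 / p := by positivity
    linarith
  refine ⟨hμ_pos, fun m hm ↦ ?_, exists_forall_ge_eq_of_min_affine hc₀ hc₁ (by linarith) hrec'⟩
  rw [hμT, hrec']
  exact sub_le_min_affine_sub hc₁ hm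

theorem stmt_19 (n : ℕ) (hn : 3 ≤ n) (p : ℝ) (hp : 2 * (n : ℝ) / ((n : ℝ) + 2) < p)
    (a : ℝ) (ha : a = ((n : ℝ) - 1) / ((n : ℝ) + 1))
    (k : ℝ → ℝ)
    (hk : ∀ b : ℝ, k b = ((n : ℝ) - 1 + a) / 2 - 1
      + (((n : ℝ) - 1 - b) / 2) * (2 - 2 / p) + ((n : ℝ) / 2) * (2 / p - 1))
    (μ : ℝ)
    (hμ : μ = ((n : ℝ) + 3) / (2 * ((n : ℝ) + 1)) - 1 / p + 1 / 2
      - (2 * (n : ℝ) - ((n : ℝ) + 2) * p) / (((n : ℝ) + 1) * (p - 1) * p)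
      - ((n : ℝ) - 1) / (((n : ℝ) + 1) * p))
    (b : ℕ → ℝ) (h0 : b 0 = -1)
    (hrec : ∀ m, b (m + 1) = min ((n : ℝ) - 1 - k (b m)) a) :
    0 < μ
    ∧ (∀ m, b m ≤ (2 * (n : ℝ) - ((n : ℝ) + 2) * p) / (((n : ℝ) + 1) * (p - 1)) + a →
        μ ≤ b (m + 1) - b m)
    ∧ ∃ N : ℕ, ∀ m, N ≤ m → b m = a :=
  stmt_19_general n hn p hp a ha k hk μ hμ b hrec
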